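/- arXiv:2402.01055 — 4 statements merged into one kernel-verified Lean document; each statement's English description precedes it below -/
import Mathlib

section
/- Let T be an invertible column-stochastic noise matrix, L ∈ R^{n×n} a loss matrix, and L' = (Tᵀ)^{-1} L. Then any classifier h* that is Bayes optimal for the linear performance measure C ↦ ⟨L', C⟩ over the set of feasible noisy confusion matrices C_{D̃} is also Bayes optimal for C ↦ ⟨L, C⟩ over the set of feasible clean confusion matrices C_D. That is, if ⟨L', C^{D̃}[h*]⟩ = inf_{C̃ ∈ C_{D̃}} ⟨L', C̃⟩, then ⟨L, C^D[h*]⟩ = inf_{C ∈ C_D} ⟨L, C⟩. -/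
/-- Frobenius inner product of matrices. -/
def frob {n : ℕ} (A B : Matrix (Fin n) (Fin n) ℝ) : ℝ := ∑ i, ∑ j, A i j * B i j

open Matrix

theorem frob_eq_trace_transpose_mul {n : ℕ} (A B : Matrix (Fin n) (Fin n) ℝ) :
    frob A B = trace (Aᵀ * B) := by
  simp only [frob, trace, diag, mul_apply, transpose_apply]
  exact Finset.sum_comm

theorem frob_mul_right {n : ℕ} (A M C : Matrix (Fin n) (Fin n) ℝ) :
    frob A (M * C) = frob (Mᵀ * A) C := by
  rw [frob_eq_trace_transpose_mul, frob_eq_trace_transpose_mul, transpose_mul,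
    transpose_transpose, Matrix.mul_assoc]

theorem frob_transpose_inv_mul_mul {n : ℕ} {T : Matrix (Fin n) (Fin n) ℝ} (hT : IsUnit T.det)
    (L C : Matrix (Fin n) (Fin n) ℝ) : frob (Tᵀ⁻¹ * L) (T * C) = frob L C := by
  rw [frob_mul_right, ← Matrix.mul_assoc,
    mul_nonsing_inv _ (by rwa [det_transpose]), Matrix.one_mul]

theorem noise_corrected_loss_bayes_optimal_general
    {n : ℕ} {H : Type*} (T L : Matrix (Fin n) (Fin n) ℝ)
    (hT : IsUnit T.det)
    -- clean and noisy confusion matrices of each (randomized) classifier, CCN relation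
    (Cclean Cnoisy : H → Matrix (Fin n) (Fin n) ℝ)
    (hrel : ∀ h, Cnoisy h = T * Cclean h)
    (hstar : H)
    -- h* is Bayes optimal for L' = (T.transpose)⁻¹ L w.r.t. the noisy distribution
    (hopt : frob ((T.transpose)⁻¹ * L) (Cnoisy hstar)
      = sInf ((fun C => frob ((T.transpose)⁻¹ * L) C) '' Set.range Cnoisy)) :
    frob L (Cclean hstar) = sInf ((fun C => frob L C) '' Set.range Cclean) := by
  have hloss : ∀ h, frob (Tᵀ⁻¹ * L) (Cnoisy h) = frob L (Cclean h) := fun h => by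
    rw [hrel h, frob_transpose_inv_mul_mul hT]
  have hvalues : (fun C => frob (Tᵀ⁻¹ * L) C) '' Set.range Cnoisy
      = (fun C => frob L C) '' Set.range Cclean := by
    rw [← Set.range_comp, ← Set.range_comp]
    exact congrArg Set.range (funext hloss)
  rw [← hloss hstar, hopt, hvalues]

/-- Any classifier Bayes optimal for the noise-corrected loss `L' = (T.transpose)⁻¹ L` w.r.t. the
noisy distribution is also Bayes optimal for `L` w.r.t. the clean distribution. -/
theorem noise_corrected_loss_bayes_optimal
    {n : ℕ} {H : Type*} (T L : Matrix (Fin n) (Fin n) ℝ)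
    (hT : IsUnit T.det)
    -- column stochastic with entries in [0,1]
    (hTnn : ∀ i j, 0 ≤ T i j ∧ T i j ≤ 1) (hTcol : ∀ j, ∑ i, T i j = 1)
    -- clean and noisy confusion matrices of each (randomized) classifier, CCN relation
    (Cclean Cnoisy : H → Matrix (Fin n) (Fin n) ℝ)
    (hrel : ∀ h, Cnoisy h = T * Cclean h)
    (hstar : H)
    -- h* is Bayes optimal for L' = (T.transpose)⁻¹ L w.r.t. the noisy distribution
    (hopt : frob ((T.transpose)⁻¹ * L) (Cnoisy hstar)
      = sInf ((fun C => frob ((T.transpose)⁻¹ * L) C) '' Set.range Cnoisy)) :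
    frob L (Cclean hstar) = sInf ((fun C => frob L C) '' Set.range Cclean) :=
  noise_corrected_loss_bayes_optimal_general T L hT Cclean Cnoisy hrel hstar hopt
end

section
/- Let ψ(C) = ⟨A, C⟩ / ⟨B, C⟩ be a ratio-of-linear performance measure with ⟨B, C⟩ > 0 for all C ∈ C_D, and define the noise-corrected measure ψ̃ = ψ ∘ T^{-1}. Then for every C̃ ∈ C_{D̃}: (i) ψ̃(C̃) = ⟨(Tᵀ)^{-1}A, C̃⟩ / ⟨(Tᵀ)^{-1}B, C̃⟩ with denominator ⟨(Tᵀ)^{-1}B, C̃⟩ > 0, and (ii) any classifier h* achieving inf_{C̃ ∈ C_{D̃}} ψ̃(C̃) also achieves inf_{C ∈ C_D} ψ(C), i.e., ψ(C^D[h*]) = inf_{C ∈ C_D} ψ(C). -/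
/-!
Since `T` is invertible, `C ↦ T * C` is a bijection from the clean feasible set onto the noisy
one, and along it `ψ̃ (T * C) = ψ C`; so both measures take the same values, classifier by
classifier, and have the same infimum. The closed form of `ψ̃` comes from moving `T⁻¹` across
the Frobenius pairing, where it becomes `(T⁻¹)ᵀ = (Tᵀ)⁻¹`.
-/

theorem frob_eq_trace {n : ℕ} (A B : Matrix (Fin n) (Fin n) ℝ) :
    frob A B = (A.transpose * B).trace := by
  simp only [frob, Matrix.trace, Matrix.diag, Matrix.mul_apply, Matrix.transpose_apply]
  rw [Finset.sum_comm]

theorem frob_mul_left {n : ℕ} (M A C : Matrix (Fin n) (Fin n) ℝ) :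
    frob (M * A) C = frob A (M.transpose * C) := by
  rw [frob_eq_trace, frob_eq_trace, Matrix.transpose_mul, Matrix.mul_assoc]

theorem frob_transpose_inv_mul {n : ℕ} (T A C : Matrix (Fin n) (Fin n) ℝ) :
    frob ((T.transpose)⁻¹ * A) C = frob A (T⁻¹ * C) := by
  rw [frob_mul_left, ← Matrix.transpose_nonsing_inv, Matrix.transpose_transpose]

theorem noise_corrected_ratio_of_linear_general
    {n : ℕ} {H : Type*} (T A B : Matrix (Fin n) (Fin n) ℝ)
    (hT : IsUnit T.det)
    (Cclean Cnoisy : H → Matrix (Fin n) (Fin n) ℝ)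
    (hrel : ∀ h, Cnoisy h = T * Cclean h)
    (ψ : Matrix (Fin n) (Fin n) ℝ → ℝ) (hψ : ∀ C, ψ C = frob A C / frob B C)
    (hpos : ∀ C ∈ Set.range Cclean, 0 < frob B C)
    (ψt : Matrix (Fin n) (Fin n) ℝ → ℝ) (hψt : ∀ Ct, ψt Ct = ψ (T⁻¹ * Ct))
    (hstar : H)
    (hopt : ψt (Cnoisy hstar) = sInf (ψt '' Set.range Cnoisy)) :
    (∀ Ct ∈ Set.range Cnoisy,
        0 < frob ((T.transpose)⁻¹ * B) Ct ∧
        ψt Ct = frob ((T.transpose)⁻¹ * A) Ct / frob ((T.transpose)⁻¹ * B) Ct) ∧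
      ψ (Cclean hstar) = sInf (ψ '' Set.range Cclean) := by
  have hclean (h : H) : T⁻¹ * Cnoisy h = Cclean h := by
    rw [hrel, Matrix.nonsing_inv_mul_cancel_left _ _ hT]
  have hcomp : ψt ∘ Cnoisy = ψ ∘ Cclean := funext fun h => by
    rw [Function.comp_apply, hψt, hclean, Function.comp_apply]
  refine ⟨?_, ?_⟩
  · rintro _ ⟨h, rfl⟩
    rw [frob_transpose_inv_mul, frob_transpose_inv_mul, hψt, hψ, hclean]
    exact ⟨hpos _ ⟨h, rfl⟩, rfl⟩
  · calc ψ (Cclean hstar) = ψt (Cnoisy hstar) := (congrFun hcomp hstar).symm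
      _ = sInf (ψt '' Set.range Cnoisy) := hopt
      _ = sInf (ψ '' Set.range Cclean) := by rw [← Set.range_comp, hcomp, Set.range_comp]

/-- For a ratio-of-linear performance measure `ψ(C) = ⟨A,C⟩/⟨B,C⟩`, the noise-corrected
measure `ψ̃ = ψ ∘ T⁻¹` is again ratio-of-linear with positive denominator on the noisy
feasible set, and any classifier Bayes optimal for `ψ̃` w.r.t. the noisy distribution
is Bayes optimal for `ψ` w.r.t. the clean distribution. -/
theorem noise_corrected_ratio_of_linear
    {n : ℕ} {H : Type*} (T A B : Matrix (Fin n) (Fin n) ℝ)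
    (hT : IsUnit T.det)
    (hTnn : ∀ i j, 0 ≤ T i j ∧ T i j ≤ 1) (hTcol : ∀ j, ∑ i, T i j = 1)
    (Cclean Cnoisy : H → Matrix (Fin n) (Fin n) ℝ)
    (hrel : ∀ h, Cnoisy h = T * Cclean h)
    (ψ : Matrix (Fin n) (Fin n) ℝ → ℝ) (hψ : ∀ C, ψ C = frob A C / frob B C)
    (hpos : ∀ C ∈ Set.range Cclean, 0 < frob B C)
    (ψt : Matrix (Fin n) (Fin n) ℝ → ℝ) (hψt : ∀ Ct, ψt Ct = ψ (T⁻¹ * Ct))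
    (hstar : H)
    (hopt : ψt (Cnoisy hstar) = sInf (ψt '' Set.range Cnoisy)) :
    (∀ Ct ∈ Set.range Cnoisy,
        0 < frob ((T.transpose)⁻¹ * B) Ct ∧
        ψt Ct = frob ((T.transpose)⁻¹ * A) Ct / frob ((T.transpose)⁻¹ * B) Ct) ∧
      ψ (Cclean hstar) = sInf (ψ '' Set.range Cclean) :=
  noise_corrected_ratio_of_linear_general T A B hT Cclean Cnoisy hrel ψ hψ hpos ψt hψt hstar hopt
end

section
/- Let T and T̂ be invertible n×n matrices, and let C^D, C̃, Ĉ ∈ R^{n×n} with C^D = T^{-1} C̃ and ‖Ĉ‖₁ ≤ 1. Then ‖C^D − T̂^{-1} Ĉ‖_{vec,∞} ≤ n ‖T^{-1}‖₁ · ‖C̃ − Ĉ‖_{vec,∞} + ‖T̂^{-1} − T^{-1}‖₁. -/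
/-!
Write `T⁻¹ C̃ - T̂⁻¹ Ĉ = T⁻¹ (C̃ - Ĉ) + (T⁻¹ - T̂⁻¹) Ĉ` and bound each entry of the two products.
An entry of `A B` is at most `n ‖A‖₁ ‖B‖_{vec,∞}`, since each of its `n` terms is, and at most
`‖A‖₁ ‖B‖₁`, since `|A i k| ≤ ‖A‖₁` and the column sums of `|B|` are at most `‖B‖₁`.
-/

/-- Entrywise max norm of a matrix. -/
noncomputable def vecInfNorm {n : ℕ} (M : Matrix (Fin n) (Fin n) ℝ) : ℝ := ⨆ i, ⨆ j, |M i j|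

/-- Induced matrix 1-norm (maximum absolute column sum). -/
noncomputable def onorm1 {n : ℕ} (M : Matrix (Fin n) (Fin n) ℝ) : ℝ := ⨆ j, ∑ i, |M i j|

open Finset

section MatrixNorms

variable {n : ℕ}

lemma abs_le_vecInfNorm (M : Matrix (Fin n) (Fin n) ℝ) (i j : Fin n) :
    |M i j| ≤ vecInfNorm M :=
  (le_ciSup (f := fun j => |M i j|) (Finite.bddAbove_range _) j).trans
    (le_ciSup (f := fun i => ⨆ j, |M i j|) (Finite.bddAbove_range _) i)

lemma vecInfNorm_nonneg (M : Matrix (Fin n) (Fin n) ℝ) : 0 ≤ vecInfNorm M :=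
  Real.iSup_nonneg fun _ => Real.iSup_nonneg fun _ => abs_nonneg _

lemma vecInfNorm_le {M : Matrix (Fin n) (Fin n) ℝ} {c : ℝ} (hc : 0 ≤ c)
    (h : ∀ i j, |M i j| ≤ c) : vecInfNorm M ≤ c :=
  Real.iSup_le (fun i => Real.iSup_le (h i) hc) hc

lemma sum_abs_le_onorm1 (M : Matrix (Fin n) (Fin n) ℝ) (j : Fin n) :
    ∑ i, |M i j| ≤ onorm1 M :=
  le_ciSup (f := fun j => ∑ i, |M i j|) (Finite.bddAbove_range _) j

lemma abs_le_onorm1 (M : Matrix (Fin n) (Fin n) ℝ) (i j : Fin n) : |M i j| ≤ onorm1 M :=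
  (single_le_sum (f := fun i => |M i j|) (fun _ _ => abs_nonneg _) (mem_univ i)).trans
    (sum_abs_le_onorm1 M j)

lemma onorm1_nonneg (M : Matrix (Fin n) (Fin n) ℝ) : 0 ≤ onorm1 M :=
  Real.iSup_nonneg fun _ => sum_nonneg fun _ _ => abs_nonneg _

lemma onorm1_sub_comm (A B : Matrix (Fin n) (Fin n) ℝ) : onorm1 (A - B) = onorm1 (B - A) := by
  simp only [onorm1, Matrix.sub_apply, abs_sub_comm]

lemma abs_mul_apply_le (A B : Matrix (Fin n) (Fin n) ℝ) (i j : Fin n) :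
    |(A * B) i j| ≤ ∑ k, |A i k| * |B k j| := by
  rw [Matrix.mul_apply]
  simpa only [abs_mul] using abs_sum_le_sum_abs (fun k => A i k * B k j) univ

lemma abs_mul_apply_le_card_mul (A B : Matrix (Fin n) (Fin n) ℝ) (i j : Fin n) :
    |(A * B) i j| ≤ n * onorm1 A * vecInfNorm B :=
  calc |(A * B) i j| ≤ ∑ k, |A i k| * |B k j| := abs_mul_apply_le A B i j
    _ ≤ ∑ _k : Fin n, onorm1 A * vecInfNorm B :=
        sum_le_sum fun k _ => mul_le_mul (abs_le_onorm1 A i k) (abs_le_vecInfNorm B k j)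
          (abs_nonneg _) (onorm1_nonneg A)
    _ = n * onorm1 A * vecInfNorm B := by simp [mul_assoc]

lemma abs_mul_apply_le_onorm1_mul (A B : Matrix (Fin n) (Fin n) ℝ) (i j : Fin n) :
    |(A * B) i j| ≤ onorm1 A * onorm1 B :=
  calc |(A * B) i j| ≤ ∑ k, |A i k| * |B k j| := abs_mul_apply_le A B i j
    _ ≤ ∑ k, onorm1 A * |B k j| :=
        sum_le_sum fun k _ => mul_le_mul_of_nonneg_right (abs_le_onorm1 A i k) (abs_nonneg _)
    _ = onorm1 A * ∑ k, |B k j| := (mul_sum _ _ _).symm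
    _ ≤ onorm1 A * onorm1 B :=
        mul_le_mul_of_nonneg_left (sum_abs_le_onorm1 B j) (onorm1_nonneg A)

end MatrixNorms

theorem noise_corrected_op2_estimated_T_general
    {n : ℕ} (T That CD Ctilde Chat : Matrix (Fin n) (Fin n) ℝ)
    (hCD : CD = T⁻¹ * Ctilde) (hChat : onorm1 Chat ≤ 1) :
    vecInfNorm (CD - That⁻¹ * Chat)
      ≤ (n : ℝ) * onorm1 T⁻¹ * vecInfNorm (Ctilde - Chat) + onorm1 (That⁻¹ - T⁻¹) := by
  have hsplit : CD - That⁻¹ * Chat = T⁻¹ * (Ctilde - Chat) + (T⁻¹ - That⁻¹) * Chat := by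
    rw [hCD]; noncomm_ring
  have hfirst_nonneg : 0 ≤ (n : ℝ) * onorm1 T⁻¹ * vecInfNorm (Ctilde - Chat) := by
    have := onorm1_nonneg T⁻¹; have := vecInfNorm_nonneg (Ctilde - Chat); positivity
  rw [hsplit, onorm1_sub_comm]
  refine vecInfNorm_le (add_nonneg hfirst_nonneg (onorm1_nonneg _)) fun i j => ?_
  have hsecond : |((T⁻¹ - That⁻¹) * Chat) i j| ≤ onorm1 (T⁻¹ - That⁻¹) :=
    (abs_mul_apply_le_onorm1_mul _ _ i j).trans
      (mul_le_of_le_one_right (onorm1_nonneg _) hChat)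
  exact (abs_add_le _ _).trans (add_le_add (abs_mul_apply_le_card_mul _ _ i j) hsecond)

/-- Guarantee for noise-corrected confusion matrix estimation with an estimated
noise matrix `T̂`: if `C^D = T⁻¹ C̃` and `‖Ĉ‖₁ ≤ 1`, then
`‖C^D − T̂⁻¹ Ĉ‖_{vec,∞} ≤ n ‖T⁻¹‖₁ ‖C̃ − Ĉ‖_{vec,∞} + ‖T̂⁻¹ − T⁻¹‖₁`. -/
theorem noise_corrected_op2_estimated_T
    {n : ℕ} (T That CD Ctilde Chat : Matrix (Fin n) (Fin n) ℝ)
    (hT : IsUnit T.det) (hThat : IsUnit That.det)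
    (hCD : CD = T⁻¹ * Ctilde) (hChat : onorm1 Chat ≤ 1) :
    vecInfNorm (CD - That⁻¹ * Chat)
      ≤ (n : ℝ) * onorm1 T⁻¹ * vecInfNorm (Ctilde - Chat) + onorm1 (That⁻¹ - T⁻¹) :=
  noise_corrected_op2_estimated_T_general T That CD Ctilde Chat hCD hChat
end

section
/- Let ψ : R^{n×n} → R be defined on feasible confusion matrices, let T be invertible, and suppose h* is Bayes optimal for ψ̃ := ψ ∘ T^{-1} with respect to the noisy distribution, i.e., ψ̃(C^{D̃}[h*]) = inf_{C̃ ∈ C_{D̃}} ψ̃(C̃). Then the ψ-regret of h* with respect to the clean distribution is zero: ψ(C^D[h*]) − inf_{C ∈ C_D} ψ(C) = 0. -/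
theorem Set.image_range_congr {ι α β γ : Type*} {f : α → γ} {g : ι → α} {f' : β → γ}
    {g' : ι → β} (h : ∀ i, f (g i) = f' (g' i)) :
    f '' Set.range g = f' '' Set.range g' := by
  simp only [← Set.range_comp]
  exact congrArg Set.range (funext h)

theorem noise_corrected_zero_regret_general
    {n : ℕ} {H : Type*} (T : Matrix (Fin n) (Fin n) ℝ)
    (hT : IsUnit T.det)
    (Cclean Cnoisy : H → Matrix (Fin n) (Fin n) ℝ)
    (hrel : ∀ h, Cnoisy h = T * Cclean h)
    (ψ : Matrix (Fin n) (Fin n) ℝ → ℝ)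
    (ψt : Matrix (Fin n) (Fin n) ℝ → ℝ) (hψt : ∀ Ct, ψt Ct = ψ (T⁻¹ * Ct))
    (hstar : H)
    (hopt : ψt (Cnoisy hstar) = sInf (ψt '' Set.range Cnoisy)) :
    ψ (Cclean hstar) - sInf (ψ '' Set.range Cclean) = 0 := by
  have hcorrected : ∀ h, ψt (Cnoisy h) = ψ (Cclean h) := fun h => by
    rw [hψt, hrel, Matrix.nonsing_inv_mul_cancel_left _ _ hT]
  rw [← hcorrected, hopt, Set.image_range_congr hcorrected, sub_self]

/-- If `h*` is Bayes optimal for the noise-corrected measure `ψ̃ = ψ ∘ T⁻¹` w.r.t. the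
noisy distribution, then its `ψ`-regret w.r.t. the clean distribution is zero. -/
theorem noise_corrected_zero_regret
    {n : ℕ} {H : Type*} (T : Matrix (Fin n) (Fin n) ℝ)
    (hT : IsUnit T.det)
    (hTnn : ∀ i j, 0 ≤ T i j ∧ T i j ≤ 1) (hTcol : ∀ j, ∑ i, T i j = 1)
    (Cclean Cnoisy : H → Matrix (Fin n) (Fin n) ℝ)
    (hrel : ∀ h, Cnoisy h = T * Cclean h)
    (ψ : Matrix (Fin n) (Fin n) ℝ → ℝ)
    (ψt : Matrix (Fin n) (Fin n) ℝ → ℝ) (hψt : ∀ Ct, ψt Ct = ψ (T⁻¹ * Ct))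
    (hstar : H)
    (hopt : ψt (Cnoisy hstar) = sInf (ψt '' Set.range Cnoisy)) :
    ψ (Cclean hstar) - sInf (ψ '' Set.range Cclean) = 0 :=
  noise_corrected_zero_regret_general T hT Cclean Cnoisy hrel ψ ψt hψt hstar hopt
end
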